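/- arXiv:1906.00567 — 4 statements merged into one kernel-verified Lean document; each statement's English description precedes it below -/
import Mathlib

section
/- Let a and b be real numbers with a > 0 and b > 0. The point y = a / (a + b) is the unique maximizer on (0, 1) of f(y) = a * Real.log y + b * Real.log (1 - y): if y ∈ (0, 1) and y ≠ a / (a + b), then a * Real.log y + b * Real.log (1 - y) < a * Real.log (a / (a + b)) + b * Real.log (b / (a + b)). -/
open Real

/-- Gibbs' inequality for two points. -/
theorem mul_log_add_mul_log_lt_of_add_le {a b x z : ℝ} (ha : 0 < a) (hb : 0 < b) (hx : 0 < x)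
    (hz : 0 < z) (hsum : x + z ≤ a + b) (hne : x ≠ a) :
    a * log x + b * log z < a * log a + b * log b := by
  have hxa : log (x / a) < x / a - 1 :=
    log_lt_sub_one_of_pos (div_pos hx ha) (by rwa [Ne, div_eq_one_iff_eq ha.ne'])
  have hzb : log (z / b) ≤ z / b - 1 := log_le_sub_one_of_pos (div_pos hz hb)
  calc a * log x + b * log z
      = a * log a + b * log b + (a * log (x / a) + b * log (z / b)) := by
        rw [log_div hx.ne' ha.ne', log_div hz.ne' hb.ne']; ring
    _ < a * log a + b * log b + (a * (x / a - 1) + b * (z / b - 1)) :=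
      add_lt_add_right (add_lt_add_of_lt_of_le (mul_lt_mul_of_pos_left hxa ha)
        (mul_le_mul_of_nonneg_left hzb hb.le)) _
    _ = a * log a + b * log b + (x + z - (a + b)) := by field_simp; ring
    _ ≤ a * log a + b * log b := by linarith

theorem gan_discriminator_pointwise_unique_max (a b : ℝ) (ha : 0 < a) (hb : 0 < b) :
    ∀ y : ℝ, 0 < y → y < 1 → y ≠ a / (a + b) →
      a * Real.log y + b * Real.log (1 - y) <
        a * Real.log (a / (a + b)) + b * Real.log (b / (a + b)) := by
  intro y hy0 hy1 hne
  have hab : 0 < a + b := add_pos ha hb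
  have hweights : a / (a + b) + b / (a + b) = 1 := by field_simp
  have gibbs := mul_log_add_mul_log_lt_of_add_le (div_pos ha hab) (div_pos hb hab) hy0
    (sub_pos.mpr hy1) (by rw [hweights, add_sub_cancel]) hne
  calc a * log y + b * log (1 - y)
      = (a + b) * (a / (a + b) * log y + b / (a + b) * log (1 - y)) := by field_simp
    _ < (a + b) * (a / (a + b) * log (a / (a + b)) + b / (a + b) * log (b / (a + b))) :=
      mul_lt_mul_of_pos_left gibbs hab
    _ = a * log (a / (a + b)) + b * log (b / (a + b)) := by field_simp
end

section
/- Let (X, 𝒜, μ) be a σ-finite measure space and let p, q : X → ℝ be measurable functions with p(x) > 0 and q(x) > 0 for μ-a.e. x, and ∫ p dμ = 1 and ∫ q dμ = 1. Let D : X → ℝ be measurable with 0 < D(x) < 1 for μ-a.e. x. Assume the functions x ↦ p(x)·log D(x) + q(x)·log(1 − D(x)) and x ↦ p(x)·log(p(x)/(p(x)+q(x))) + q(x)·log(q(x)/(p(x)+q(x))) are μ-integrable. Then ∫ (p·log D + q·log(1 − D)) dμ ≤ ∫ (p·log(p/(p+q)) + q·log(q/(p+q))) dμ. -/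
/-! The inequality holds pointwise: for `a, b > 0` and `0 < d < 1`, the tangent-line bound
`log t ≤ t - 1` gives `a log d ≤ a log (a / (a + b)) + d (a + b) - a` and
`b log (1 - d) ≤ b log (b / (a + b)) + (1 - d) (a + b) - b`, and the two error terms cancel.
Integrating the pointwise bound gives the theorem. -/

open MeasureTheory Real

lemma mul_log_le_mul_log_add {a x y : ℝ} (ha : 0 ≤ a) (hx : 0 < x) (hy : 0 < y) :
    a * log x ≤ a * log y + a * (x / y - 1) := by
  have h : log x - log y ≤ x / y - 1 := by
    rw [← log_div hx.ne' hy.ne']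
    exact log_le_sub_one_of_pos (div_pos hx hy)
  nlinarith [mul_le_mul_of_nonneg_left h ha]

lemma mul_log_add_mul_log_one_sub_le {a b d : ℝ} (ha : 0 < a) (hb : 0 < b) (hd0 : 0 < d)
    (hd1 : d < 1) :
    a * log d + b * log (1 - d) ≤ a * log (a / (a + b)) + b * log (b / (a + b)) := by
  have hab : 0 < a + b := add_pos ha hb
  have hp := mul_log_le_mul_log_add ha.le hd0 (div_pos ha hab)
  have hq := mul_log_le_mul_log_add hb.le (sub_pos.mpr hd1) (div_pos hb hab)
  have hp_rem : a * (d / (a / (a + b)) - 1) = d * (a + b) - a := by field_simp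
  have hq_rem : b * ((1 - d) / (b / (a + b)) - 1) = (1 - d) * (a + b) - b := by field_simp
  linarith

theorem gan_optimal_discriminator_general
    {X : Type*} [MeasurableSpace X] (μ : Measure X)
    (p q D : X → ℝ)
    (hp0 : ∀ᵐ x ∂μ, 0 < p x) (hq0 : ∀ᵐ x ∂μ, 0 < q x)
    (hD : ∀ᵐ x ∂μ, 0 < D x ∧ D x < 1)
    (hint1 : Integrable
      (fun x => p x * Real.log (D x) + q x * Real.log (1 - D x)) μ)
    (hint2 : Integrable
      (fun x => p x * Real.log (p x / (p x + q x)) +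
        q x * Real.log (q x / (p x + q x))) μ) :
    ∫ x, (p x * Real.log (D x) + q x * Real.log (1 - D x)) ∂μ ≤
      ∫ x, (p x * Real.log (p x / (p x + q x)) +
        q x * Real.log (q x / (p x + q x))) ∂μ := by
  refine integral_mono_ae hint1 hint2 ?_
  filter_upwards [hp0, hq0, hD] with x hp hq hDx
  exact mul_log_add_mul_log_one_sub_le hp hq hDx.1 hDx.2

theorem gan_optimal_discriminator
    {X : Type*} [MeasurableSpace X] (μ : Measure X) [SigmaFinite μ]
    (p q D : X → ℝ)
    (hpm : Measurable p) (hqm : Measurable q) (hDm : Measurable D)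
    (hp0 : ∀ᵐ x ∂μ, 0 < p x) (hq0 : ∀ᵐ x ∂μ, 0 < q x)
    (hp1 : ∫ x, p x ∂μ = 1) (hq1 : ∫ x, q x ∂μ = 1)
    (hD : ∀ᵐ x ∂μ, 0 < D x ∧ D x < 1)
    (hint1 : Integrable
      (fun x => p x * Real.log (D x) + q x * Real.log (1 - D x)) μ)
    (hint2 : Integrable
      (fun x => p x * Real.log (p x / (p x + q x)) +
        q x * Real.log (q x / (p x + q x))) μ) :
    ∫ x, (p x * Real.log (D x) + q x * Real.log (1 - D x)) ∂μ ≤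
      ∫ x, (p x * Real.log (p x / (p x + q x)) +
        q x * Real.log (q x / (p x + q x))) ∂μ :=
  gan_optimal_discriminator_general μ p q D hp0 hq0 hD hint1 hint2
end

section
/- Let (X, 𝒜, μ) be a σ-finite measure space and let p, q : X → ℝ be measurable functions with p(x) > 0 and q(x) > 0 for μ-a.e. x, and ∫ p dμ = 1 and ∫ q dμ = 1. Let D : X → ℝ be measurable with 0 < D(x) < 1 for μ-a.e. x, and assume the functions x ↦ p(x)·log D(x) + q(x)·log(1 − D(x)) and x ↦ p(x)·log(p(x)/(p(x)+q(x))) + q(x)·log(q(x)/(p(x)+q(x))) are μ-integrable. If ∫ (p·log D + q·log(1 − D)) dμ = ∫ (p·log(p/(p+q)) + q·log(q/(p+q))) dμ, then D(x) = p(x)/(p(x)+q(x)) for μ-a.e. x. -/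
open MeasureTheory

lemma gibbs_aux (a b t : ℝ) (ha : 0 < a) (hb : 0 < b) (ht0 : 0 < t) (ht1 : t < 1) :
    a * Real.log t + b * Real.log (1 - t) ≤
      a * Real.log (a / (a + b)) + b * Real.log (b / (a + b)) ∧
    (a * Real.log t + b * Real.log (1 - t) =
      a * Real.log (a / (a + b)) + b * Real.log (b / (a + b)) → t = a / (a + b)) := by
  have hab : 0 < a + b := by linarith
  set s := a / (a + b) with hs_def
  have hs0 : 0 < s := div_pos ha hab
  have hs1 : s < 1 := by rw [hs_def, div_lt_one hab]; linarith
  have h1s : 1 - s = b / (a + b) := by rw [hs_def]; field_simp; ring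
  have h1t0 : 0 < 1 - t := by linarith
  have h1s0 : 0 < 1 - s := by linarith
  have hu0 : 0 < t / s := div_pos ht0 hs0
  have hv0 : 0 < (1 - t) / (1 - s) := div_pos h1t0 h1s0
  have h1 : a * (t / s) = (a + b) * t := by
    rw [hs_def]; field_simp
  have h2 : b * ((1 - t) / (1 - s)) = (a + b) * (1 - t) := by
    rw [h1s]; field_simp
  have hsum : a * (t / s - 1) + b * ((1 - t) / (1 - s) - 1) = 0 := by
    nlinarith [h1, h2]
  have hlogu : Real.log (t / s) = Real.log t - Real.log s :=
    Real.log_div ht0.ne' hs0.ne'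
  have hlogv : Real.log ((1 - t) / (1 - s)) = Real.log (1 - t) - Real.log (1 - s) :=
    Real.log_div h1t0.ne' h1s0.ne'
  have hle_u : Real.log (t / s) ≤ t / s - 1 := Real.log_le_sub_one_of_pos hu0
  have hle_v : Real.log ((1 - t) / (1 - s)) ≤ (1 - t) / (1 - s) - 1 :=
    Real.log_le_sub_one_of_pos hv0
  have hb1s : Real.log (b / (a + b)) = Real.log (1 - s) := by rw [h1s]
  constructor
  · rw [hb1s]
    nlinarith [mul_le_mul_of_nonneg_left hle_u ha.le,
      mul_le_mul_of_nonneg_left hle_v hb.le]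
  · rw [hb1s]
    intro heq
    by_contra hne
    have hune : t / s ≠ 1 := by
      intro h
      exact hne ((div_eq_one_iff_eq hs0.ne').mp h)
    have hlt_u : Real.log (t / s) < t / s - 1 :=
      Real.log_lt_sub_one_of_pos hu0 hune
    nlinarith [mul_lt_mul_of_pos_left hlt_u ha,
      mul_le_mul_of_nonneg_left hle_v hb.le]

theorem gan_optimal_discriminator_unique
    {X : Type*} [MeasurableSpace X] (μ : Measure X) [SigmaFinite μ]
    (p q D : X → ℝ)
    (hpm : Measurable p) (hqm : Measurable q) (hDm : Measurable D)
    (hp0 : ∀ᵐ x ∂μ, 0 < p x) (hq0 : ∀ᵐ x ∂μ, 0 < q x)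
    (hp1 : ∫ x, p x ∂μ = 1) (hq1 : ∫ x, q x ∂μ = 1)
    (hD : ∀ᵐ x ∂μ, 0 < D x ∧ D x < 1)
    (hint1 : Integrable
      (fun x => p x * Real.log (D x) + q x * Real.log (1 - D x)) μ)
    (hint2 : Integrable
      (fun x => p x * Real.log (p x / (p x + q x)) +
        q x * Real.log (q x / (p x + q x))) μ)
    (heq : ∫ x, (p x * Real.log (D x) + q x * Real.log (1 - D x)) ∂μ =
      ∫ x, (p x * Real.log (p x / (p x + q x)) +
        q x * Real.log (q x / (p x + q x))) ∂μ) :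
    ∀ᵐ x ∂μ, D x = p x / (p x + q x) := by
  set g : X → ℝ := fun x =>
    (p x * Real.log (p x / (p x + q x)) + q x * Real.log (q x / (p x + q x))) -
      (p x * Real.log (D x) + q x * Real.log (1 - D x)) with hg_def
  have hgi : Integrable g μ := hint2.sub hint1
  have hgnn : 0 ≤ᵐ[μ] g := by
    filter_upwards [hp0, hq0, hD] with x hpx hqx hDx
    have := (gibbs_aux (p x) (q x) (D x) hpx hqx hDx.1 hDx.2).1
    simp only [hg_def, Pi.zero_apply]
    linarith
  have hgint : ∫ x, g x ∂μ = 0 := by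
    rw [hg_def]
    rw [integral_sub hint2 hint1]
    linarith [heq]
  have hg0 : g =ᵐ[μ] 0 := (integral_eq_zero_iff_of_nonneg_ae hgnn hgi).mp hgint
  filter_upwards [hp0, hq0, hD, hg0] with x hpx hqx hDx hgx
  have heqx : p x * Real.log (D x) + q x * Real.log (1 - D x) =
      p x * Real.log (p x / (p x + q x)) + q x * Real.log (q x / (p x + q x)) := by
    simp only [hg_def, Pi.zero_apply] at hgx
    linarith
  exact (gibbs_aux (p x) (q x) (D x) hpx hqx hDx.1 hDx.2).2 heqx
end

section
/- Let (X, 𝒜, μ) be a σ-finite measure space and let p, q : X → ℝ be measurable functions with p(x) > 0 and q(x) > 0 for μ-a.e. x, and ∫ p dμ = 1 and ∫ q dμ = 1. Assume x ↦ p(x)·log(p(x)/(p(x)+q(x))) + q(x)·log(q(x)/(p(x)+q(x))) is μ-integrable, and x ↦ p(x)·log(2·p(x)/(p(x)+q(x))) and x ↦ q(x)·log(2·q(x)/(p(x)+q(x))) are μ-integrable. Then ∫ (p·log(p/(p+q)) + q·log(q/(p+q))) dμ ≥ −Real.log 4, with equality if and only if p(x) = q(x) for μ-a.e. x. -/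
open MeasureTheory

lemma aux_le (a s : ℝ) (ha : 0 < a) (hs : 0 < s) :
    a - s/2 ≤ a * Real.log (2*a/s) := by
  have h1 : Real.log (s/(2*a)) ≤ s/(2*a) - 1 := Real.log_le_sub_one_of_pos (by positivity)
  have h2 : Real.log (2*a/s) = - Real.log (s/(2*a)) := by
    rw [← Real.log_inv]; congr 1; field_simp
  have h3 : a * (s/(2*a)) = s/2 := by field_simp
  nlinarith [mul_le_mul_of_nonneg_left h1 ha.le]

lemma aux_lt (a s : ℝ) (ha : 0 < a) (hs : 0 < s) (hne : 2*a ≠ s) :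
    a - s/2 < a * Real.log (2*a/s) := by
  have hne1 : s/(2*a) ≠ 1 := by
    intro h
    apply hne
    field_simp at h
    linarith
  have h1 : Real.log (s/(2*a)) < s/(2*a) - 1 :=
    Real.log_lt_sub_one_of_pos (by positivity) hne1
  have h2 : Real.log (2*a/s) = - Real.log (s/(2*a)) := by
    rw [← Real.log_inv]; congr 1; field_simp
  have h3 : a * (s/(2*a)) = s/2 := by field_simp
  nlinarith [mul_lt_mul_of_pos_left h1 ha]

theorem standalone_gan_value_ge_neg_log_four
    {X : Type*} [MeasurableSpace X] (μ : Measure X) [SigmaFinite μ]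
    (p q : X → ℝ)
    (hpm : Measurable p) (hqm : Measurable q)
    (hp0 : ∀ᵐ x ∂μ, 0 < p x) (hq0 : ∀ᵐ x ∂μ, 0 < q x)
    (hp1 : ∫ x, p x ∂μ = 1) (hq1 : ∫ x, q x ∂μ = 1)
    (hint : Integrable
      (fun x => p x * Real.log (p x / (p x + q x)) +
        q x * Real.log (q x / (p x + q x))) μ)
    (hintp : Integrable (fun x => p x * Real.log (2 * p x / (p x + q x))) μ)
    (hintq : Integrable (fun x => q x * Real.log (2 * q x / (p x + q x))) μ) :
    -Real.log 4 ≤ ∫ x, (p x * Real.log (p x / (p x + q x)) +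
        q x * Real.log (q x / (p x + q x))) ∂μ ∧
      (∫ x, (p x * Real.log (p x / (p x + q x)) +
          q x * Real.log (q x / (p x + q x))) ∂μ = -Real.log 4 ↔
        ∀ᵐ x ∂μ, p x = q x) := by
  -- p and q are integrable since their integrals are nonzero
  have hpInt : Integrable p μ := by
    by_contra h
    rw [integral_undef h] at hp1
    norm_num at hp1
  have hqInt : Integrable q μ := by
    by_contra h
    rw [integral_undef h] at hq1
    norm_num at hq1
  set g : X → ℝ := fun x =>
    p x * Real.log (2 * p x / (p x + q x)) + q x * Real.log (2 * q x / (p x + q x)) with hg_def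
  have hgInt : Integrable g μ := hintp.add hintq
  have hgnn : 0 ≤ᵐ[μ] g := by
    filter_upwards [hp0, hq0] with x hp hq
    have hs : 0 < p x + q x := by linarith
    have h1 := aux_le (p x) (p x + q x) hp hs
    have h2 := aux_le (q x) (p x + q x) hq hs
    simp only [hg_def, Pi.zero_apply]
    linarith
  -- pointwise identity
  have hid : (fun x => p x * Real.log (p x / (p x + q x)) +
      q x * Real.log (q x / (p x + q x))) =ᵐ[μ]
      fun x => g x - (p x + q x) * Real.log 2 := by
    filter_upwards [hp0, hq0] with x hp hq
    have hs : 0 < p x + q x := by linarith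
    have e1 : Real.log (2 * p x / (p x + q x)) = Real.log 2 + Real.log (p x / (p x + q x)) := by
      rw [mul_div_assoc, Real.log_mul two_ne_zero (by positivity)]
    have e2 : Real.log (2 * q x / (p x + q x)) = Real.log 2 + Real.log (q x / (p x + q x)) := by
      rw [mul_div_assoc, Real.log_mul two_ne_zero (by positivity)]
    simp only [hg_def, e1, e2]
    ring
  have hsumInt : Integrable (fun x => (p x + q x) * Real.log 2) μ :=
    (hpInt.add hqInt).mul_const _
  have hlog4 : Real.log 4 = 2 * Real.log 2 := by
    rw [show (4:ℝ) = 2^2 by norm_num, Real.log_pow]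
    push_cast; ring
  have hIeq : ∫ x, (p x * Real.log (p x / (p x + q x)) +
      q x * Real.log (q x / (p x + q x))) ∂μ = (∫ x, g x ∂μ) - Real.log 4 := by
    rw [integral_congr_ae hid, integral_sub hgInt hsumInt]
    congr 1
    have : ∫ x, (p x + q x) * Real.log 2 ∂μ = (∫ x, (p x + q x) ∂μ) * Real.log 2 :=
      integral_mul_const _ _
    rw [this, integral_add hpInt hqInt, hp1, hq1, hlog4]
    ring
  have hgnn' : 0 ≤ ∫ x, g x ∂μ := integral_nonneg_of_ae hgnn
  constructor
  · rw [hIeq]; linarith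
  · rw [hIeq]
    have hzero : (∫ x, g x ∂μ) - Real.log 4 = -Real.log 4 ↔ ∫ x, g x ∂μ = 0 := by
      constructor <;> intro h <;> linarith
    rw [hzero, integral_eq_zero_iff_of_nonneg_ae hgnn hgInt]
    constructor
    · intro h
      filter_upwards [h, hp0, hq0] with x hx hp hq
      by_contra hne
      have hs : 0 < p x + q x := by linarith
      have h1 := aux_lt (p x) (p x + q x) hp hs (by intro h'; apply hne; linarith)
      have h2 := aux_le (q x) (p x + q x) hq hs
      have : g x > 0 := by simp only [hg_def]; linarith
      simp only [Pi.zero_apply] at hx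
      rw [hx] at this
      exact lt_irrefl 0 this
    · intro h
      filter_upwards [h, hp0, hq0] with x hx hp hq
      have hs : 2 * p x / (p x + q x) = 1 := by
        rw [← hx]; field_simp; ring
      have hs' : 2 * q x / (p x + q x) = 1 := by
        rw [← hx]; field_simp; ring
      simp only [hg_def, Pi.zero_apply, hs, hs', Real.log_one, mul_zero, add_zero]
end
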